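/- arXiv:2401.12859 — 2 statements merged into one kernel-verified Lean document; each statement's English description precedes it below -/
import Mathlib

section
/- With the hypotheses of the preceding setup (positive vectors X, Y with x_i/x_{i+1} ≥ y_i/y_{i+1} for all i, and additionally the strict inequality x_1/x_2 > y_1/y_2), after multiplication by Λ_m(a) the strict reversed inequalities y'_i / y'_{i+1} > x'_i / x'_{i+1} hold for all 1 ≤ i ≤ m. -/
open scoped BigOperators

/-- Generalized binomial coefficient `C(n,k)` for integer `n` and `k`, valued in `ℝ`:
`n(n-1)⋯(n-k+1)/k!` for `k ≥ 0`, and `0` for `k < 0`. -/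
noncomputable def ichooseR (n : ℤ) (k : ℤ) : ℝ :=
  if k < 0 then 0 else (∏ i ∈ Finset.range k.toNat, ((n : ℝ) - i)) / (k.toNat.factorial : ℝ)

/-- Generalized multichoose `⟪n, r⟫ = C(n + r - 1, r)`, valued in `ℝ`. -/
noncomputable def imchooseR (n : ℤ) (r : ℤ) : ℝ := ichooseR (n + r - 1) r

/-- The `(m+1)×(m+1)` real matrix `Λ_m(a)` whose (1-indexed) `(i,j)`-entry is
`⟪a, m + 2 - i - j⟫`. -/
noncomputable def LamR (m : ℕ) (a : ℤ) : Matrix (Fin (m+1)) (Fin (m+1)) ℝ :=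
  fun i j => imchooseR a ((m : ℤ) - (i : ℕ) - (j : ℕ))

noncomputable def dfun (a : ℤ) (n : ℕ) : ℝ :=
  (∏ i ∈ Finset.range n, ((a : ℝ) + i)) / (n.factorial : ℝ)

lemma dfun_pos (a : ℤ) (ha : 0 < a) (n : ℕ) : 0 < dfun a n := by
  unfold dfun
  have ha1 : (1:ℝ) ≤ (a:ℝ) := by exact_mod_cast ha
  apply div_pos
  · apply Finset.prod_pos
    intro i _
    have : (0:ℝ) ≤ (i:ℝ) := Nat.cast_nonneg i
    linarith
  · exact_mod_cast Nat.factorial_pos n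

lemma imchooseR_ofNat (a : ℤ) (n : ℕ) : imchooseR a (n : ℤ) = dfun a n := by
  unfold imchooseR ichooseR dfun
  rw [if_neg (by omega)]
  have ht : ((n:ℤ)).toNat = n := Int.toNat_natCast n
  rw [ht]
  congr 1
  rw [← Finset.prod_range_reflect (fun i => (a:ℝ) + i) n]
  refine Finset.prod_congr rfl fun i hi => ?_
  have hi' := Finset.mem_range.mp hi
  have h1 : ((n - 1 - i : ℕ) : ℤ) = (n:ℤ) - 1 - i := by omega
  have h2 : ((n - 1 - i : ℕ) : ℝ) = (n:ℝ) - 1 - i := by exact_mod_cast h1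
  push_cast
  rw [h2]
  ring

lemma imchooseR_neg (a : ℤ) {r : ℤ} (hr : r < 0) : imchooseR a r = 0 := by
  unfold imchooseR ichooseR
  rw [if_pos hr]

lemma imchooseR_nonneg (a : ℤ) (ha : 0 < a) (r : ℤ) : 0 ≤ imchooseR a r := by
  rcases lt_or_ge r 0 with hr | hr
  · rw [imchooseR_neg a hr]
  · lift r to ℕ using hr
    rw [imchooseR_ofNat]
    exact (dfun_pos a ha r).le

lemma dfun_succ (a : ℤ) (n : ℕ) : dfun a (n+1) = dfun a n * (((a:ℝ) + n) / (n+1)) := by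
  unfold dfun
  have hfac : (((n+1).factorial : ℕ) : ℝ) = (n.factorial : ℝ) * ((n:ℝ)+1) := by
    rw [Nat.factorial_succ]; push_cast; ring
  rw [Finset.prod_range_succ, hfac, div_mul_div_comm]

lemma dfun_ratio (a : ℤ) (ha : 0 < a) {p q : ℕ} (hpq : p ≤ q) :
    dfun a p * dfun a (q+1) ≤ dfun a q * dfun a (p+1) := by
  rw [dfun_succ, dfun_succ]
  have hp := dfun_pos a ha p
  have hq := dfun_pos a ha q
  have ha1 : (1:ℝ) ≤ (a:ℝ) := by exact_mod_cast ha
  have hpq' : (p:ℝ) ≤ (q:ℝ) := by exact_mod_cast hpq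
  have hc : ((a:ℝ) + q) / ((q:ℝ)+1) ≤ ((a:ℝ)+p)/((p:ℝ)+1) := by
    rw [div_le_div_iff₀ (by positivity) (by positivity)]
    nlinarith
  have h0 : (0:ℝ) ≤ ((a:ℝ)+q)/((q:ℝ)+1) := by positivity
  nlinarith [mul_pos hp hq, mul_le_mul_of_nonneg_left hc (mul_pos hp hq).le]

lemma ratio_int (a : ℤ) (ha : 0 < a) {p q : ℤ} (h : p ≤ q) :
    imchooseR a p * imchooseR a (q+1) ≤ imchooseR a q * imchooseR a (p+1) := by
  rcases lt_or_ge p 0 with hp | hp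
  · rw [imchooseR_neg a hp, zero_mul]
    exact mul_nonneg (imchooseR_nonneg a ha q) (imchooseR_nonneg a ha (p+1))
  · have hq : 0 ≤ q := le_trans hp h
    lift p to ℕ using hp
    lift q to ℕ using hq
    rw [show ((p:ℤ)+1) = ((p+1 : ℕ) : ℤ) by push_cast; ring,
        show ((q:ℤ)+1) = ((q+1:ℕ):ℤ) by push_cast; ring,
        imchooseR_ofNat, imchooseR_ofNat, imchooseR_ofNat, imchooseR_ofNat]
    exact dfun_ratio a ha (by exact_mod_cast h)

noncomputable def Ft (a : ℤ) (n : ℤ) {N : ℕ} (X Y : Fin N → ℝ) (j l : Fin N) : ℝ :=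
  imchooseR a (n - (j:ℕ)) * imchooseR a (n - 1 - (l:ℕ)) * (Y j * X l - X j * Y l)

lemma Ft_pair_nonneg (a : ℤ) (ha : 0 < a) {N : ℕ} (X Y : Fin N → ℝ) (n : ℕ)
    (hchain : ∀ j l : Fin N, (j:ℕ) ≤ (l:ℕ) → Y j * X l ≤ X j * Y l)
    (j l : Fin N) : 0 ≤ Ft a n X Y j l + Ft a n X Y l j := by
  have main : ∀ j l : Fin N, (j:ℕ) ≤ (l:ℕ) → 0 ≤ Ft a n X Y j l + Ft a n X Y l j := by
    intro j l hjl
    unfold Ft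
    have hS : 0 ≤ X j * Y l - Y j * X l := by linarith [hchain j l hjl]
    have hle : (n:ℤ) - 1 - (l:ℕ) ≤ (n:ℤ) - 1 - (j:ℕ) := by
      have : ((j:ℕ):ℤ) ≤ ((l:ℕ):ℤ) := by exact_mod_cast hjl
      omega
    have hr := ratio_int a ha hle
    rw [show (n:ℤ) - 1 - (j:ℕ) + 1 = (n:ℤ) - (j:ℕ) by ring,
        show (n:ℤ) - 1 - (l:ℕ) + 1 = (n:ℤ) - (l:ℕ) by ring] at hr
    have hC : imchooseR a ((n:ℤ) - (j:ℕ)) * imchooseR a ((n:ℤ) - 1 - (l:ℕ)) ≤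
        imchooseR a ((n:ℤ) - (l:ℕ)) * imchooseR a ((n:ℤ) - 1 - (j:ℕ)) := by
      calc imchooseR a ((n:ℤ) - (j:ℕ)) * imchooseR a ((n:ℤ) - 1 - (l:ℕ))
          = imchooseR a ((n:ℤ) - 1 - (l:ℕ)) * imchooseR a ((n:ℤ) - (j:ℕ)) := mul_comm _ _
        _ ≤ imchooseR a ((n:ℤ) - 1 - (j:ℕ)) * imchooseR a ((n:ℤ) - (l:ℕ)) := hr
        _ = imchooseR a ((n:ℤ) - (l:ℕ)) * imchooseR a ((n:ℤ) - 1 - (j:ℕ)) := mul_comm _ _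
    have hid : imchooseR a ((n:ℤ) - (j:ℕ)) * imchooseR a ((n:ℤ) - 1 - (l:ℕ)) * (Y j * X l - X j * Y l)
        + imchooseR a ((n:ℤ) - (l:ℕ)) * imchooseR a ((n:ℤ) - 1 - (j:ℕ)) * (Y l * X j - X l * Y j)
        = (imchooseR a ((n:ℤ) - (l:ℕ)) * imchooseR a ((n:ℤ) - 1 - (j:ℕ))
           - imchooseR a ((n:ℤ) - (j:ℕ)) * imchooseR a ((n:ℤ) - 1 - (l:ℕ)))
          * (X j * Y l - Y j * X l) := by ring
    rw [hid]
    exact mul_nonneg (by linarith) hS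
  rcases le_total (j:ℕ) (l:ℕ) with h | h
  · exact main j l h
  · have := main l j h
    linarith

lemma cross_lt (a : ℤ) (ha : 0 < a) (N : ℕ) (X Y : Fin N → ℝ)
    (hchain : ∀ j l : Fin N, (j:ℕ) ≤ (l:ℕ) → Y j * X l ≤ X j * Y l)
    (n : ℕ) (hn1 : 1 ≤ n) (hnN : n < N)
    (hstrict : Y ⟨0, lt_of_le_of_lt (Nat.zero_le n) hnN⟩ * X ⟨n, hnN⟩ <
               X ⟨0, lt_of_le_of_lt (Nat.zero_le n) hnN⟩ * Y ⟨n, hnN⟩) :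
    (∑ j : Fin N, imchooseR a ((n:ℤ) - (j:ℕ)) * X j) *
      (∑ l : Fin N, imchooseR a ((n:ℤ) - 1 - (l:ℕ)) * Y l) <
    (∑ j : Fin N, imchooseR a ((n:ℤ) - (j:ℕ)) * Y j) *
      (∑ l : Fin N, imchooseR a ((n:ℤ) - 1 - (l:ℕ)) * X l) := by
  set l0 : Fin N := ⟨0, lt_of_le_of_lt (Nat.zero_le n) hnN⟩ with hl0
  set j0 : Fin N := ⟨n, hnN⟩ with hj0
  have key := Ft_pair_nonneg a ha X Y n hchain
  -- the special positive pair
  have hwit : 0 < Ft a n X Y j0 l0 + Ft a n X Y l0 j0 := by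
    have h1 : Ft a n X Y l0 j0 = 0 := by
      unfold Ft
      rw [show (n:ℤ) - 1 - ((j0:ℕ):ℤ) = (-1 : ℤ) by rw [hj0]; simp,
          imchooseR_neg a (by norm_num : (-1:ℤ) < 0)]
      ring
    have h2 : 0 < Ft a n X Y j0 l0 := by
      unfold Ft
      have e1 : (n:ℤ) - ((j0:ℕ):ℤ) = ((0:ℕ):ℤ) := by rw [hj0]; simp
      have e2 : (n:ℤ) - 1 - ((l0:ℕ):ℤ) = ((n-1:ℕ):ℤ) := by rw [hl0]; simp; omega
      rw [e1, e2, imchooseR_ofNat, imchooseR_ofNat]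
      have := dfun_pos a ha 0
      have := dfun_pos a ha (n-1)
      have hd : 0 < Y j0 * X l0 - X j0 * Y l0 := by
        simp only [hj0, hl0]; linarith [hstrict]
      positivity
    linarith
  have hpos : 0 < ∑ j : Fin N, ∑ l : Fin N, (Ft a n X Y j l + Ft a n X Y l j) := by
    apply Finset.sum_pos'
    · intro j _
      exact Finset.sum_nonneg fun l _ => key j l
    · refine ⟨j0, Finset.mem_univ _, ?_⟩
      apply Finset.sum_pos'
      · intro l _; exact key j0 l
      · exact ⟨l0, Finset.mem_univ _, hwit⟩
  have hsplit : (∑ j : Fin N, ∑ l : Fin N, (Ft a n X Y j l + Ft a n X Y l j))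
      = (∑ j : Fin N, ∑ l : Fin N, Ft a n X Y j l)
        + (∑ j : Fin N, ∑ l : Fin N, Ft a n X Y l j) := by
    simp [Finset.sum_add_distrib]
  have hcomm : (∑ j : Fin N, ∑ l : Fin N, Ft a n X Y l j)
      = (∑ j : Fin N, ∑ l : Fin N, Ft a n X Y j l) := Finset.sum_comm
  have hFpos : 0 < ∑ j : Fin N, ∑ l : Fin N, Ft a n X Y j l := by
    rw [hsplit, hcomm] at hpos; linarith
  have hexpand : (∑ j : Fin N, ∑ l : Fin N, Ft a n X Y j l)
      = (∑ j : Fin N, imchooseR a ((n:ℤ) - (j:ℕ)) * Y j) *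
          (∑ l : Fin N, imchooseR a ((n:ℤ) - 1 - (l:ℕ)) * X l)
        - (∑ j : Fin N, imchooseR a ((n:ℤ) - (j:ℕ)) * X j) *
          (∑ l : Fin N, imchooseR a ((n:ℤ) - 1 - (l:ℕ)) * Y l) := by
    rw [Finset.sum_mul_sum, Finset.sum_mul_sum, ← Finset.sum_sub_distrib]
    refine Finset.sum_congr rfl fun j _ => ?_
    rw [← Finset.sum_sub_distrib]
    refine Finset.sum_congr rfl fun l _ => ?_
    unfold Ft; ring
  rw [hexpand] at hFpos
  linarith

/-- With positive vectors `X, Y` satisfying `xᵢ/xᵢ₊₁ ≥ yᵢ/yᵢ₊₁` for all `1 ≤ i ≤ m` and the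
strict inequality `x₁/x₂ > y₁/y₂`, after multiplication by `Λ_m(a)` the strict reversed
inequalities `y'ᵢ/y'ᵢ₊₁ > x'ᵢ/x'ᵢ₊₁` hold for all `1 ≤ i ≤ m`. -/
theorem Lam_mulVec_strict_reverses_ratio_ineqs (m : ℕ) (hm : 1 ≤ m) (a : ℤ) (ha : 0 < a)
    (X Y : Fin (m+1) → ℝ) (hX : ∀ i, 0 < X i) (hY : ∀ i, 0 < Y i)
    (hXY : ∀ i : Fin m, X i.castSucc / X i.succ ≥ Y i.castSucc / Y i.succ)
    (hstrict : X ⟨0, by omega⟩ / X ⟨1, by omega⟩ > Y ⟨0, by omega⟩ / Y ⟨1, by omega⟩) :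
    ∀ i : Fin m,
      ((LamR m a).mulVec Y) i.castSucc / ((LamR m a).mulVec Y) i.succ >
        ((LamR m a).mulVec X) i.castSucc / ((LamR m a).mulVec X) i.succ := by
  -- one-step cross inequalities
  have step : ∀ i : Fin m, Y i.castSucc * X i.succ ≤ X i.castSucc * Y i.succ := by
    intro i
    have h := hXY i
    rw [ge_iff_le, div_le_div_iff₀ (hY _) (hX _)] at h
    linarith
  -- chain
  have chain : ∀ k : ℕ, ∀ j l : Fin (m+1), (l:ℕ) = (j:ℕ) + k → Y j * X l ≤ X j * Y l := by
    intro k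
    induction k with
    | zero =>
      intro j l h
      have : j = l := Fin.ext (by omega)
      subst this
      exact le_of_eq (by ring)
    | succ k ih =>
      intro j l h
      have hlt : (j:ℕ) + k < m + 1 := by omega
      set mid : Fin (m+1) := ⟨(j:ℕ) + k, hlt⟩ with hmid
      have hA : Y j * X mid ≤ X j * Y mid := ih j mid rfl
      have hmm : (j:ℕ) + k < m := by omega
      have hB : Y mid * X l ≤ X mid * Y l := by
        have := step ⟨(j:ℕ) + k, hmm⟩
        have e1 : (⟨(j:ℕ) + k, hmm⟩ : Fin m).castSucc = mid := rfl
        have e2 : (⟨(j:ℕ) + k, hmm⟩ : Fin m).succ = l := Fin.ext (by simp; omega)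
        rwa [e1, e2] at this
      have h1 := mul_le_mul_of_nonneg_left hB (hY j).le
      have h2 := mul_le_mul_of_nonneg_right hA (hY l).le
      have h3 : Y j * Y mid * X l ≤ X j * Y mid * Y l := by nlinarith
      have := hY mid
      nlinarith
  have hchain : ∀ j l : Fin (m+1), (j:ℕ) ≤ (l:ℕ) → Y j * X l ≤ X j * Y l := by
    intro j l h
    exact chain ((l:ℕ) - (j:ℕ)) j l (by omega)
  -- strict chain from 0
  have hsb : Y ⟨0, by omega⟩ * X ⟨1, by omega⟩ < X ⟨0, by omega⟩ * Y ⟨1, by omega⟩ := by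
    rw [gt_iff_lt, div_lt_div_iff₀ (hY _) (hX _)] at hstrict
    linarith
  have hchainS : ∀ l : Fin (m+1), 1 ≤ (l:ℕ) →
      Y ⟨0, by omega⟩ * X l < X ⟨0, by omega⟩ * Y l := by
    intro l hl
    set one : Fin (m+1) := ⟨1, by omega⟩ with hone
    have hB : Y one * X l ≤ X one * Y l := hchain one l (by simpa [hone] using hl)
    have h1 := mul_le_mul_of_nonneg_left hB (hY ⟨0, by omega⟩).le
    have h2 := mul_lt_mul_of_pos_right hsb (hY l)
    have := hY one
    nlinarith [hY ⟨0, by omega⟩, hX l, hY l, hX one]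
  intro i
  set n : ℕ := m - (i:ℕ) with hn
  have hn1 : 1 ≤ n := by omega
  have hnN : n < m + 1 := by omega
  have hni : (n:ℤ) = (m:ℤ) - (i:ℕ) := by omega
  have eYc : ((LamR m a).mulVec Y) i.castSucc
      = ∑ j : Fin (m+1), imchooseR a ((n:ℤ) - (j:ℕ)) * Y j := by
    simp only [Matrix.mulVec, dotProduct, LamR]
    refine Finset.sum_congr rfl fun j _ => ?_
    congr 1
    congr 1
    simp [Fin.coe_castSucc]
    have := i.isLt
    omega
  have eXc : ((LamR m a).mulVec X) i.castSucc
      = ∑ j : Fin (m+1), imchooseR a ((n:ℤ) - (j:ℕ)) * X j := by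
    simp only [Matrix.mulVec, dotProduct, LamR]
    refine Finset.sum_congr rfl fun j _ => ?_
    congr 2
    simp [Fin.coe_castSucc]
    have := i.isLt
    omega
  have eYs : ((LamR m a).mulVec Y) i.succ
      = ∑ j : Fin (m+1), imchooseR a ((n:ℤ) - 1 - (j:ℕ)) * Y j := by
    simp only [Matrix.mulVec, dotProduct, LamR]
    refine Finset.sum_congr rfl fun j _ => ?_
    congr 2
    simp [Fin.val_succ]
    have := i.isLt
    omega
  have eXs : ((LamR m a).mulVec X) i.succ
      = ∑ j : Fin (m+1), imchooseR a ((n:ℤ) - 1 - (j:ℕ)) * X j := by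
    simp only [Matrix.mulVec, dotProduct, LamR]
    refine Finset.sum_congr rfl fun j _ => ?_
    congr 2
    simp [Fin.val_succ]
    have := i.isLt
    omega
  -- positivity of denominators
  have hdpos : ∀ Z : Fin (m+1) → ℝ, (∀ i, 0 < Z i) →
      0 < ∑ j : Fin (m+1), imchooseR a ((n:ℤ) - 1 - (j:ℕ)) * Z j := by
    intro Z hZ
    apply Finset.sum_pos'
    · intro j _
      exact mul_nonneg (imchooseR_nonneg a ha _) (hZ j).le
    · refine ⟨⟨0, by omega⟩, Finset.mem_univ _, ?_⟩
      have e : (n:ℤ) - 1 - ((0:ℕ):ℤ) = ((n-1:ℕ):ℤ) := by omega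
      simp only [Fin.val_mk]
      rw [show ((0:ℕ):ℤ) = (0:ℤ) by norm_num] at e
      rw [show (n:ℤ) - 1 - (((⟨0, by omega⟩ : Fin (m+1)):ℕ):ℤ) = ((n-1:ℕ):ℤ) by simp; omega]
      rw [imchooseR_ofNat]
      exact mul_pos (dfun_pos a ha _) (hZ _)
  have hXs := hdpos X hX
  have hYs := hdpos Y hY
  rw [gt_iff_lt, eYc, eYs, eXc, eXs, div_lt_div_iff₀ hXs hYs]
  apply cross_lt a ha (m+1) X Y hchain n hn1 hnN
  exact hchainS ⟨n, hnN⟩ (by simpa using hn1)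
end

section
/- Each higher continued fraction map r_{i,m} is strictly increasing on rational numbers in [1, ∞): if 1 ≤ x < y then r_{i,m}(x) < r_{i,m}(y). Moreover each map x ↦ r_{m,m}(x)/r_{i,m}(x) (for i < m) is also strictly increasing on [1, ∞). -/
open scoped BigOperators

/-- Generalized binomial coefficient `C(n,k)` for integer `n` and `k`, valued in `ℚ`:
`n(n-1)⋯(n-k+1)/k!` for `k ≥ 0`, and `0` for `k < 0`. -/
def ichoose (n : ℤ) (k : ℤ) : ℚ :=
  if k < 0 then 0 else (∏ i ∈ Finset.range k.toNat, ((n : ℚ) - i)) / (k.toNat.factorial : ℚ)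

/-- Generalized multichoose `⟪n, r⟫ = C(n + r - 1, r)`. -/
def imchoose (n : ℤ) (r : ℤ) : ℚ := ichoose (n + r - 1) r

/-- The `(m+1)×(m+1)` matrix `Λ_m(a)` whose (1-indexed) `(i,j)`-entry is `⟪a, m + 2 - i - j⟫`. -/
def Lam (m : ℕ) (a : ℤ) : Matrix (Fin (m+1)) (Fin (m+1)) ℚ :=
  fun i j => imchoose a ((m : ℤ) - (i : ℕ) - (j : ℕ))

/-- The product `Λ_m(a₁) ⋯ Λ_m(aₙ)` for a continued fraction `[a₁, …, aₙ]`. -/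
def CFmat (m : ℕ) (l : List ℤ) : Matrix (Fin (m+1)) (Fin (m+1)) ℚ :=
  (l.map (Lam m)).prod

/-- `r_{i,m}` of the continued fraction `l`: the `(m+1-i)`-th entry (1-indexed) of the first
column of the matrix product `Λ_m(a₁) ⋯ Λ_m(aₙ)`, divided by the bottom-left entry. -/
def rCF (m : ℕ) (l : List ℤ) (i : ℕ) : ℚ :=
  CFmat m l ⟨m - i, by omega⟩ ⟨0, by omega⟩ / CFmat m l ⟨m, by omega⟩ ⟨0, by omega⟩

/-- The value of a continued fraction `[a₁, …, aₙ] = a₁ + 1/(a₂ + 1/(⋯))`. -/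
def cfVal : List ℤ → ℚ
  | [] => 0
  | [a] => a
  | a :: l => a + 1 / cfVal l

set_option linter.unusedVariables false
set_option linter.deprecated false

lemma imchoose_neg {a r : ℤ} (hr : r < 0) : imchoose a r = 0 := by
  simp [imchoose, ichoose, hr]

lemma imchoose_zero (a : ℤ) : imchoose a 0 = 1 := by
  simp [imchoose, ichoose]

def cQ (a : ℤ) (n : ℕ) : ℚ :=
  (∏ i ∈ Finset.range n, ((a:ℚ) + n - 1 - i)) / (n.factorial : ℚ)

lemma imchoose_eq_cQ (a : ℤ) (n : ℕ) : imchoose a (n : ℤ) = cQ a n := by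
  unfold imchoose ichoose cQ
  rw [if_neg (by omega)]
  simp only [Int.toNat_natCast]
  congr 1
  refine Finset.prod_congr rfl fun i _ => ?_
  push_cast
  ring

lemma cQ_pos {a : ℤ} (ha : 1 ≤ a) (n : ℕ) : 0 < cQ a n := by
  unfold cQ
  apply div_pos
  · apply Finset.prod_pos
    intro i hi
    simp only [Finset.mem_range] at hi
    have h1 : (1:ℚ) ≤ (a:ℚ) := by exact_mod_cast ha
    have h2 : (i:ℚ) + 1 ≤ (n:ℚ) := by exact_mod_cast hi
    linarith
  · exact_mod_cast Nat.factorial_pos n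

lemma cQ_succ (a : ℤ) (n : ℕ) : cQ a (n+1) * ((n:ℚ)+1) = cQ a n * ((a:ℚ)+n) := by
  unfold cQ
  rw [Finset.prod_range_succ']
  have h1 : (∏ i ∈ Finset.range n, ((a:ℚ) + (↑(n+1)) - 1 - ↑(i+1)))
      = ∏ i ∈ Finset.range n, ((a:ℚ) + n - 1 - i) := by
    refine Finset.prod_congr rfl fun i _ => ?_
    push_cast; ring
  rw [h1]
  have h2 : ((n+1).factorial : ℚ) = ((n:ℚ)+1) * (n.factorial : ℚ) := by
    rw [Nat.factorial_succ]; push_cast; ring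
  rw [h2]
  have hfac : (n.factorial : ℚ) ≠ 0 := Nat.cast_ne_zero.mpr n.factorial_ne_zero
  have hn1 : ((n:ℚ)+1) ≠ 0 := by positivity
  field_simp
  push_cast; ring

lemma cQ_div_succ (a : ℤ) (n : ℕ) : cQ a (n+1) = cQ a n * ((a:ℚ)+n) / ((n:ℚ)+1) := by
  rw [eq_div_iff (by positivity)]
  exact cQ_succ a n

/-- one-step TP2 (weak). -/
lemma cQ_step {a : ℤ} (ha : 1 ≤ a) {α β : ℕ} (h : α ≤ β) :
    cQ a (β+1) * cQ a α ≤ cQ a β * cQ a (α+1) := by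
  have hB := (cQ_pos ha β).le
  have hA := (cQ_pos ha α).le
  have h1 : (0:ℚ) ≤ ((β:ℚ) - α) * ((a:ℚ) - 1) := by
    apply mul_nonneg
    · have : (α:ℚ) ≤ (β:ℚ) := by exact_mod_cast h
      linarith
    · have : (1:ℚ) ≤ (a:ℚ) := by exact_mod_cast ha
      linarith
  have key : cQ a (β+1) * cQ a α * (((α:ℚ)+1)*((β:ℚ)+1))
      ≤ cQ a β * cQ a (α+1) * (((α:ℚ)+1)*((β:ℚ)+1)) := by
    have eL : cQ a (β+1) * cQ a α * (((α:ℚ)+1)*((β:ℚ)+1))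
        = (cQ a (β+1) * ((β:ℚ)+1)) * (cQ a α * ((α:ℚ)+1)) := by ring
    have eR : cQ a β * cQ a (α+1) * (((α:ℚ)+1)*((β:ℚ)+1))
        = (cQ a (α+1) * ((α:ℚ)+1)) * (cQ a β * ((β:ℚ)+1)) := by ring
    rw [eL, eR, cQ_succ, cQ_succ]
    nlinarith [mul_nonneg (mul_nonneg hB hA) h1]
  exact le_of_mul_le_mul_right key (by positivity)

/-- log-concavity / TP2, natural indices. -/
lemma cQ_lc {a : ℤ} (ha : 1 ≤ a) (α s t : ℕ) :
    cQ a (α+s+t) * cQ a α ≤ cQ a (α+s) * cQ a (α+t) := by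
  induction t with
  | zero => simp
  | succ t IH =>
    have hstep : cQ a (α+s+t+1) * cQ a (α+t) ≤ cQ a (α+s+t) * cQ a (α+t+1) :=
      cQ_step ha (by omega)
    have p1 : 0 < cQ a (α+t) := cQ_pos ha _
    have p2 : (0:ℚ) ≤ cQ a α := (cQ_pos ha _).le
    have p3 : (0:ℚ) ≤ cQ a (α+t+1) := (cQ_pos ha _).le
    have e1 : α+s+(t+1) = α+s+t+1 := by omega
    have e2 : α+(t+1) = α+t+1 := by omega
    rw [e1, e2]
    nlinarith [mul_le_mul_of_nonneg_right hstep p2, mul_le_mul_of_nonneg_right IH p3]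

lemma imchoose_nonneg {a : ℤ} (ha : 1 ≤ a) (r : ℤ) : 0 ≤ imchoose a r := by
  rcases lt_or_ge r 0 with hr | hr
  · rw [imchoose_neg hr]
  · lift r to ℕ using hr
    rw [imchoose_eq_cQ]
    exact (cQ_pos ha _).le

lemma imchoose_pos {a : ℤ} (ha : 1 ≤ a) {r : ℤ} (hr : 0 ≤ r) : 0 < imchoose a r := by
  lift r to ℕ using hr
  rw [imchoose_eq_cQ]
  exact cQ_pos ha _

/-- TP2 in integer-index form. -/
lemma imchoose_tp2 {a : ℤ} (ha : 1 ≤ a) {x y d : ℤ} (hxy : x ≤ y) (hd : 0 ≤ d) :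
    imchoose a (y + d) * imchoose a x ≤ imchoose a y * imchoose a (x + d) := by
  rcases lt_or_ge x 0 with hx | hx
  · rw [imchoose_neg hx, mul_zero]
    exact mul_nonneg (imchoose_nonneg ha _) (imchoose_nonneg ha _)
  · obtain ⟨α, rfl⟩ : ∃ α : ℕ, x = (α : ℤ) := ⟨x.toNat, by omega⟩
    obtain ⟨σ, rfl⟩ : ∃ σ : ℕ, y = (α : ℤ) + σ := ⟨(y - α).toNat, by omega⟩
    obtain ⟨τ, rfl⟩ : ∃ τ : ℕ, d = (τ : ℤ) := ⟨d.toNat, by omega⟩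
    have e1 : (α : ℤ) + σ + τ = ((α + σ + τ : ℕ) : ℤ) := by push_cast; ring
    have e3 : (α : ℤ) + σ = ((α + σ : ℕ) : ℤ) := by push_cast; ring
    have e4 : (α : ℤ) + τ = ((α + τ : ℕ) : ℤ) := by push_cast; ring
    calc imchoose a ((α : ℤ) + σ + τ) * imchoose a α
        = cQ a (α + σ + τ) * cQ a α := by rw [e1, imchoose_eq_cQ, imchoose_eq_cQ]
      _ ≤ cQ a (α + σ) * cQ a (α + τ) := cQ_lc ha α σ τ
      _ = imchoose a ((α : ℤ) + σ) * imchoose a ((α : ℤ) + τ) := by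
          rw [e3, e4, imchoose_eq_cQ, imchoose_eq_cQ]

/-- strict one-step comparison between different integer parameters. -/
lemma cQ_step_strict {b c : ℤ} (hc : 1 ≤ c) (hb : c < b) (n : ℕ) :
    cQ c (n+1) * cQ b n < cQ c n * cQ b (n+1) := by
  have hb1 : 1 ≤ b := by omega
  have hC := cQ_pos hc n
  have hB := cQ_pos hb1 n
  have hcb : (c:ℚ) < (b:ℚ) := by exact_mod_cast hb
  have key : cQ c (n+1) * cQ b n * ((n:ℚ)+1) < cQ c n * cQ b (n+1) * ((n:ℚ)+1) := by
    have eL : cQ c (n+1) * cQ b n * ((n:ℚ)+1) = (cQ c (n+1) * ((n:ℚ)+1)) * cQ b n := by ring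
    have eR : cQ c n * cQ b (n+1) * ((n:ℚ)+1) = (cQ b (n+1) * ((n:ℚ)+1)) * cQ c n := by ring
    rw [eL, eR, cQ_succ, cQ_succ]
    nlinarith [mul_pos hC hB]
  exact lt_of_mul_lt_mul_right key (by positivity)

/-- strict comparison, different gaps. -/
lemma cQ_int_lt {b c : ℤ} (hc : 1 ≤ c) (hb : c < b) {r' r : ℕ} (h : r' < r) :
    cQ c r * cQ b r' < cQ c r' * cQ b r := by
  have hb1 : 1 ≤ b := by omega
  obtain ⟨d, rfl⟩ : ∃ d, r = r' + d + 1 := ⟨r - r' - 1, by omega⟩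
  clear h
  induction d with
  | zero => exact cQ_step_strict hc hb r'
  | succ d IH =>
    have e1 : r' + (d+1) + 1 = (r' + d + 1) + 1 := by omega
    rw [e1]
    have hstep : cQ c ((r'+d+1)+1) * cQ b (r'+d+1) < cQ c (r'+d+1) * cQ b ((r'+d+1)+1) :=
      cQ_step_strict hc hb (r'+d+1)
    have p1 : 0 < cQ b r' := cQ_pos hb1 _
    have p2 : 0 < cQ b ((r'+d+1)+1) := cQ_pos hb1 _
    have p3 : 0 < cQ b (r'+d+1) := cQ_pos hb1 _
    nlinarith [mul_lt_mul_of_pos_right hstep p1, mul_lt_mul_of_pos_right IH p2]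

/-- Pascal. -/
lemma ichoose_pascal (n : ℤ) (k : ℕ) :
    ichoose (n+1) ((k:ℤ)+1) = ichoose n (k:ℤ) + ichoose n ((k:ℤ)+1) := by
  unfold ichoose
  rw [if_neg (by omega), if_neg (by omega), if_neg (by omega)]
  have h1 : ((k:ℤ)+1).toNat = k+1 := by omega
  have h2 : ((k:ℤ)).toNat = k := by omega
  rw [h1, h2]
  have hP1 : (∏ i ∈ Finset.range (k+1), (((n+1:ℤ):ℚ) - i))
      = (∏ i ∈ Finset.range k, ((n:ℚ) - i)) * ((n:ℚ)+1) := by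
    rw [Finset.prod_range_succ']
    have : (∏ i ∈ Finset.range k, (((n+1:ℤ):ℚ) - ↑(i+1)))
        = ∏ i ∈ Finset.range k, ((n:ℚ) - i) := by
      refine Finset.prod_congr rfl fun i _ => ?_
      push_cast; ring
    rw [this]
    push_cast; ring
  have hP2 : (∏ i ∈ Finset.range (k+1), ((n:ℚ) - i))
      = (∏ i ∈ Finset.range k, ((n:ℚ) - i)) * ((n:ℚ) - k) := Finset.prod_range_succ _ _
  rw [hP1, hP2]
  have h3 : ((k+1).factorial : ℚ) = ((k:ℚ)+1) * (k.factorial : ℚ) := by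
    rw [Nat.factorial_succ]; push_cast; ring
  rw [h3]
  have hfac : (k.factorial : ℚ) ≠ 0 := Nat.cast_ne_zero.mpr k.factorial_ne_zero
  have hk1 : ((k:ℚ)+1) ≠ 0 := by positivity
  field_simp
  ring

/-- hockey stick. -/
lemma imchoose_hockey (a : ℤ) (R : ℕ) :
    ∑ r ∈ Finset.range (R+1), imchoose a (r:ℤ) = imchoose (a+1) (R:ℤ) := by
  induction R with
  | zero => simp [imchoose_zero]
  | succ R IH =>
    rw [Finset.sum_range_succ, IH]
    unfold imchoose
    have e1 : a + 1 + ((R:ℤ)+1) - 1 = (a + R) + 1 := by ring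
    have e2 : a + 1 + (R:ℤ) - 1 = a + R := by ring
    have e3 : a + ((R:ℤ)+1) - 1 = a + R := by ring
    push_cast
    rw [e1, e2, e3]
    exact (ichoose_pascal (a + R) R).symm

lemma imchoose_one {r : ℤ} (hr : 0 ≤ r) : imchoose 1 r = 1 := by
  lift r to ℕ using hr
  rw [imchoose_eq_cQ]
  unfold cQ
  have : (∏ i ∈ Finset.range r, (((1:ℤ):ℚ) + r - 1 - i)) = (r.factorial : ℚ) := by
    induction r with
    | zero => simp
    | succ n IH =>
      rw [Finset.prod_range_succ']
      have h1 : (∏ i ∈ Finset.range n, (((1:ℤ):ℚ) + ↑(n+1) - 1 - ↑(i+1)))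
          = ∏ i ∈ Finset.range n, (((1:ℤ):ℚ) + n - 1 - i) := by
        refine Finset.prod_congr rfl fun i _ => ?_
        push_cast; ring
      rw [h1, IH, Nat.factorial_succ]
      push_cast; ring
  rw [show (∏ i ∈ Finset.range r, (((1:ℤ):ℚ) + r - 1 - i)) = (r.factorial:ℚ) from this]
  field_simp

def colv (m : ℕ) (l : List ℤ) : Fin (m+1) → ℚ := fun i => CFmat m l i ⟨0, by omega⟩

lemma CFmat_nil (m : ℕ) : CFmat m [] = 1 := by simp [CFmat]

lemma CFmat_cons (m : ℕ) (a : ℤ) (l : List ℤ) :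
    CFmat m (a :: l) = Lam m a * CFmat m l := by simp [CFmat]

lemma colv_cons (m : ℕ) (a : ℤ) (l : List ℤ) :
    colv m (a :: l) = (Lam m a).mulVec (colv m l) := by
  funext i
  simp [colv, CFmat_cons, Matrix.mul_apply, Matrix.mulVec, dotProduct]

lemma colv_nil (m : ℕ) (i : Fin (m+1)) :
    colv m [] i = if i = ⟨0, by omega⟩ then 1 else 0 := by
  show CFmat m [] i ⟨0, by omega⟩ = _
  rw [CFmat_nil, Matrix.one_apply]

lemma colv_single (m : ℕ) (a : ℤ) (i : Fin (m+1)) :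
    colv m [a] i = imchoose a ((m : ℤ) - (i : ℕ)) := by
  simp [colv, CFmat, Lam]

lemma colv_nonneg {m : ℕ} {l : List ℤ} (hl : ∀ b ∈ l, 1 ≤ b) (i : Fin (m+1)) :
    0 ≤ colv m l i := by
  induction l generalizing i with
  | nil => rw [colv_nil]; split <;> norm_num
  | cons a t IH =>
    rw [colv_cons]
    simp only [Matrix.mulVec, dotProduct, Lam]
    apply Finset.sum_nonneg
    intro j _
    exact mul_nonneg (imchoose_nonneg (hl a (.head _)) _)
      (IH (fun b hb => hl b (.tail _ hb)) j)

lemma colv_zero_pos {m : ℕ} {l : List ℤ} (hl : ∀ b ∈ l, 1 ≤ b) :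
    0 < colv m l ⟨0, by omega⟩ := by
  induction l with
  | nil => rw [colv_nil]; norm_num
  | cons a t IH =>
    rw [colv_cons]
    simp only [Matrix.mulVec, dotProduct, Lam]
    apply Finset.sum_pos'
    · intro j _
      exact mul_nonneg (imchoose_nonneg (hl a (.head _)) _)
        (colv_nonneg (fun b hb => hl b (.tail _ hb)) j)
    · refine ⟨⟨0, by omega⟩, Finset.mem_univ _, ?_⟩
      apply mul_pos
      · exact imchoose_pos (hl a (.head _)) (by simp)
      · exact IH (fun b hb => hl b (.tail _ hb))

lemma colv_pos {m : ℕ} {l : List ℤ} (hne : l ≠ []) (hl : ∀ b ∈ l, 1 ≤ b) (i : Fin (m+1)) :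
    0 < colv m l i := by
  obtain ⟨a, t, rfl⟩ := List.exists_cons_of_ne_nil hne
  rw [colv_cons]
  simp only [Matrix.mulVec, dotProduct, Lam]
  apply Finset.sum_pos'
  · intro j _
    exact mul_nonneg (imchoose_nonneg (hl a (.head _)) _)
      (colv_nonneg (fun b hb => hl b (.tail _ hb)) j)
  · refine ⟨⟨0, by omega⟩, Finset.mem_univ _, ?_⟩
    apply mul_pos
    · apply imchoose_pos (hl a (.head _))
      have := i.isLt
      simp only [Fin.val_mk, Nat.cast_zero]
      omega
    · exact colv_zero_pos (fun b hb => hl b (.tail _ hb))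

def Dlt (m : ℕ) (v w : Fin (m+1) → ℚ) : Prop :=
  ∀ s t : Fin (m+1), s < t → v s * w t < v t * w s

lemma step_lemma (m : ℕ) {a : ℤ} (ha : 1 ≤ a) {v w : Fin (m+1) → ℚ}
    (hv : ∀ i, 0 ≤ v i) (hw : ∀ i, 0 ≤ w i)
    (hweak : ∀ k l : Fin (m+1), k < l → v k * w l ≤ v l * w k)
    (hstr : ∀ l : Fin (m+1), 0 < (l : ℕ) → v ⟨0, by omega⟩ * w l < v l * w ⟨0, by omega⟩) :
    Dlt m ((Lam m a).mulVec w) ((Lam m a).mulVec v) := by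
  intro s t hst
  have hst' : (s : ℕ) < (t : ℕ) := hst
  have htm : (t : ℕ) ≤ m := by omega
  have expand : ∀ (p : Fin (m+1)) (u : Fin (m+1) → ℚ),
      (Lam m a).mulVec u p = ∑ k : Fin (m+1), imchoose a ((m : ℤ) - (p : ℕ) - (k : ℕ)) * u k := by
    intro p u
    simp [Matrix.mulVec, dotProduct, Lam]
  set F : Fin (m+1) → Fin (m+1) → ℚ := fun k l =>
    (imchoose a ((m:ℤ) - (s:ℕ) - (k:ℕ)) * imchoose a ((m:ℤ) - (t:ℕ) - (l:ℕ))
      - imchoose a ((m:ℤ) - (t:ℕ) - (k:ℕ)) * imchoose a ((m:ℤ) - (s:ℕ) - (l:ℕ)))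
      * (w k * v l) with hF
  have key : (Lam m a).mulVec w s * (Lam m a).mulVec v t
      - (Lam m a).mulVec w t * (Lam m a).mulVec v s
      = ∑ k : Fin (m+1), ∑ l : Fin (m+1), F k l := by
    rw [expand, expand, expand, expand, Finset.sum_mul_sum, Finset.sum_mul_sum,
      ← Finset.sum_sub_distrib]
    refine Finset.sum_congr rfl fun k _ => ?_
    rw [← Finset.sum_sub_distrib]
    refine Finset.sum_congr rfl fun l _ => ?_
    simp only [hF]
    ring
  have Fdiag : ∀ k, F k k = 0 := fun k => by simp only [hF]; ring
  have split : ∑ k : Fin (m+1), ∑ l : Fin (m+1), F k l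
      = ∑ k : Fin (m+1), ∑ l : Fin (m+1), (if k < l then F k l + F l k else 0) := by
    have h0 : ∀ (k l : Fin (m+1)), F k l
        = (if k < l then F k l else 0) + (if l < k then F k l else 0) := by
      intro k l
      rcases lt_trichotomy k l with h | h | h
      · rw [if_pos h, if_neg (not_lt_of_gt h), add_zero]
      · subst h; simp [Fdiag]
      · rw [if_neg (not_lt_of_gt h), if_pos h, zero_add]
    calc ∑ k : Fin (m+1), ∑ l : Fin (m+1), F k l
        = ∑ k : Fin (m+1), ∑ l : Fin (m+1),
            ((if k < l then F k l else 0) + (if l < k then F k l else 0)) :=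
          Finset.sum_congr rfl fun k _ => Finset.sum_congr rfl fun l _ => h0 k l
      _ = (∑ k : Fin (m+1), ∑ l : Fin (m+1), (if k < l then F k l else 0))
          + ∑ k : Fin (m+1), ∑ l : Fin (m+1), (if l < k then F k l else 0) := by
          rw [← Finset.sum_add_distrib]
          refine Finset.sum_congr rfl fun k _ => ?_
          rw [← Finset.sum_add_distrib]
      _ = (∑ k : Fin (m+1), ∑ l : Fin (m+1), (if k < l then F k l else 0))
          + ∑ l : Fin (m+1), ∑ k : Fin (m+1), (if l < k then F k l else 0) := by
          congr 1
          exact Finset.sum_comm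
      _ = ∑ k : Fin (m+1), ∑ l : Fin (m+1), (if k < l then F k l + F l k else 0) := by
          rw [← Finset.sum_add_distrib]
          refine Finset.sum_congr rfl fun k _ => ?_
          rw [← Finset.sum_add_distrib]
          refine Finset.sum_congr rfl fun l _ => ?_
          split_ifs with h
          · rfl
          · rw [add_zero]
  have hterm : ∀ k l : Fin (m+1), (if k < l then F k l + F l k else 0) ≤ 0 := by
    intro k l
    split_ifs with hkl
    · have hkl' : (k : ℕ) < (l : ℕ) := hkl
      have hB : imchoose a ((m:ℤ) - (s:ℕ) - (k:ℕ)) * imchoose a ((m:ℤ) - (t:ℕ) - (l:ℕ))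
          ≤ imchoose a ((m:ℤ) - (t:ℕ) - (k:ℕ)) * imchoose a ((m:ℤ) - (s:ℕ) - (l:ℕ)) := by
        have h := imchoose_tp2 ha
          (x := (m:ℤ) - (t:ℕ) - (l:ℕ)) (y := (m:ℤ) - (s:ℕ) - (l:ℕ))
          (d := ((l:ℕ) : ℤ) - ((k:ℕ) : ℤ)) (by omega) (by omega)
        have e1 : (m:ℤ) - (s:ℕ) - (l:ℕ) + (((l:ℕ):ℤ) - ((k:ℕ):ℤ)) = (m:ℤ) - (s:ℕ) - (k:ℕ) := by ring
        have e2 : (m:ℤ) - (t:ℕ) - (l:ℕ) + (((l:ℕ):ℤ) - ((k:ℕ):ℤ)) = (m:ℤ) - (t:ℕ) - (k:ℕ) := by ring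
        rw [e1, e2] at h
        linarith
      have hf : 0 ≤ w k * v l - w l * v k := by
        have := hweak k l hkl
        nlinarith
      have hFF : F k l + F l k
          = (imchoose a ((m:ℤ) - (s:ℕ) - (k:ℕ)) * imchoose a ((m:ℤ) - (t:ℕ) - (l:ℕ))
            - imchoose a ((m:ℤ) - (t:ℕ) - (k:ℕ)) * imchoose a ((m:ℤ) - (s:ℕ) - (l:ℕ)))
            * (w k * v l - w l * v k) := by
        simp only [hF]; ring
      rw [hFF]
      exact mul_nonpos_iff.mpr (Or.inr ⟨by linarith, hf⟩)
    · exact le_refl 0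
  -- strict term at (0, m - s)
  have hsm : (s : ℕ) < m := by omega
  set k0 : Fin (m+1) := ⟨0, by omega⟩ with hk0
  set l0 : Fin (m+1) := ⟨m - (s:ℕ), by omega⟩ with hl0
  have hk0l0 : k0 < l0 := by
    simp only [Fin.lt_def, hk0, hl0]
    omega
  have hstrict : (if k0 < l0 then F k0 l0 + F l0 k0 else 0) < 0 := by
    rw [if_pos hk0l0]
    have hFF : F k0 l0 + F l0 k0
        = (imchoose a ((m:ℤ) - (s:ℕ) - (k0:ℕ)) * imchoose a ((m:ℤ) - (t:ℕ) - (l0:ℕ))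
          - imchoose a ((m:ℤ) - (t:ℕ) - (k0:ℕ)) * imchoose a ((m:ℤ) - (s:ℕ) - (l0:ℕ)))
          * (w k0 * v l0 - w l0 * v k0) := by
      simp only [hF]; ring
    rw [hFF]
    have ek0 : ((k0:ℕ) : ℤ) = 0 := by simp [hk0]
    have el0 : ((l0:ℕ) : ℤ) = (m:ℤ) - (s:ℕ) := by
      simp only [hl0]
      push_cast [Nat.cast_sub (by omega : (s:ℕ) ≤ m)]
      ring
    have hz1 : imchoose a ((m:ℤ) - (t:ℕ) - (l0:ℕ)) = 0 := by
      apply imchoose_neg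
      rw [el0]; omega
    have hz2 : imchoose a ((m:ℤ) - (s:ℕ) - (l0:ℕ)) = 1 := by
      rw [el0]
      have : (m:ℤ) - (s:ℕ) - ((m:ℤ) - (s:ℕ)) = 0 := by ring
      rw [this, imchoose_zero]
    have hz3 : 0 < imchoose a ((m:ℤ) - (t:ℕ) - (k0:ℕ)) := by
      apply imchoose_pos ha
      rw [ek0]; omega
    have hfpos : 0 < w k0 * v l0 - w l0 * v k0 := by
      have := hstr l0 (by simp [hl0]; omega)
      nlinarith
    rw [hz1, hz2]
    have : imchoose a ((m:ℤ) - (s:ℕ) - (k0:ℕ)) * 0 - imchoose a ((m:ℤ) - (t:ℕ) - (k0:ℕ)) * 1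
        = -imchoose a ((m:ℤ) - (t:ℕ) - (k0:ℕ)) := by ring
    rw [this]
    exact mul_neg_of_neg_of_pos (by linarith) hfpos
  have inner_le : ∀ k : Fin (m+1), (∑ l : Fin (m+1), (if k < l then F k l + F l k else 0)) ≤ 0 :=
    fun k => Finset.sum_nonpos fun l _ => hterm k l
  have inner0 : (∑ l : Fin (m+1), (if k0 < l then F k0 l + F l k0 else 0)) < 0 := by
    have h := Finset.sum_lt_sum (s := Finset.univ)
      (f := fun l : Fin (m+1) => (if k0 < l then F k0 l + F l k0 else 0))
      (g := fun _ : Fin (m+1) => (0:ℚ))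
      (fun l _ => hterm k0 l) ⟨l0, Finset.mem_univ _, hstrict⟩
    simpa using h
  have total : (∑ k : Fin (m+1), ∑ l : Fin (m+1), (if k < l then F k l + F l k else 0)) < 0 := by
    have h := Finset.sum_lt_sum (s := Finset.univ)
      (f := fun k : Fin (m+1) => ∑ l : Fin (m+1), (if k < l then F k l + F l k else 0))
      (g := fun _ : Fin (m+1) => (0:ℚ))
      (fun k _ => inner_le k) ⟨k0, Finset.mem_univ _, inner0⟩
    simpa using h
  rw [split] at key
  linarith

lemma cfVal_single (a : ℤ) : cfVal [a] = a := rfl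

lemma cfVal_cons (a : ℤ) {l : List ℤ} (hl : l ≠ []) :
    cfVal (a :: l) = a + 1 / cfVal l := by
  cases l with
  | nil => exact absurd rfl hl
  | cons b t => rfl

lemma one_le_cfVal {l : List ℤ} (hl : l ≠ []) (h : ∀ a ∈ l, 1 ≤ a) : 1 ≤ cfVal l := by
  induction l with
  | nil => exact absurd rfl hl
  | cons a t IH =>
    cases t with
    | nil =>
      rw [cfVal_single]
      exact_mod_cast h a (.head _)
    | cons b t' =>
      rw [cfVal_cons _ (by simp)]
      have ht : 1 ≤ cfVal (b :: t') := IH (by simp) (fun x hx => h x (.tail _ hx))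
      have ha : (1:ℚ) ≤ (a:ℚ) := by exact_mod_cast h a (.head _)
      have : 0 < 1 / cfVal (b :: t') := by positivity
      linarith

lemma cfVal_lt_head (a : ℤ) {t : List ℤ} (ht : t ≠ []) (h : ∀ x ∈ t, 1 ≤ x) :
    (a : ℚ) < cfVal (a :: t) := by
  rw [cfVal_cons _ ht]
  have h1 := one_le_cfVal ht h
  have : 0 < 1 / cfVal t := by positivity
  linarith

lemma cfVal_le_head_succ (a : ℤ) {t : List ℤ} (ht : t ≠ []) (h : ∀ x ∈ t, 1 ≤ x) :
    cfVal (a :: t) ≤ (a : ℚ) + 1 := by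
  rw [cfVal_cons _ ht]
  have h1 := one_le_cfVal ht h
  have : 1 / cfVal t ≤ 1 := by
    rw [div_le_one (by linarith)]
    linarith
  linarith

lemma cfVal_eq_one {l : List ℤ} (hl : l ≠ []) (h : ∀ a ∈ l, 1 ≤ a) (hv : cfVal l = 1) :
    l = [1] := by
  cases l with
  | nil => exact absurd rfl hl
  | cons a t =>
    cases t with
    | nil =>
      rw [cfVal_single] at hv
      have : a = 1 := by exact_mod_cast hv
      rw [this]
    | cons b t' =>
      exfalso
      have h1 := cfVal_lt_head a (t := b :: t') (by simp) (fun x hx => h x (.tail _ hx))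
      have ha : (1:ℚ) ≤ (a:ℚ) := by exact_mod_cast h a (.head _)
      linarith

lemma dlt_trans {m : ℕ} {u v w : Fin (m+1) → ℚ}
    (hu : ∀ i, 0 < u i) (hv : ∀ i, 0 < v i) (hw : ∀ i, 0 < w i)
    (h1 : Dlt m u v) (h2 : Dlt m v w) : Dlt m u w := by
  intro s t hst
  have a1 := h1 s t hst
  have a2 := h2 s t hst
  nlinarith [mul_lt_mul_of_pos_right a1 (hw t), mul_lt_mul_of_pos_left a2 (hu t), hv t,
    mul_pos (hu s) (hw t), mul_pos (hu t) (hw s)]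

lemma colv_one (m : ℕ) : colv m [1] = fun _ => 1 := by
  funext i
  rw [colv_single]
  apply imchoose_one
  have := i.isLt
  omega

lemma colv_intstep (m : ℕ) (a : ℤ) : colv m (a :: [1]) = colv m [a+1] := by
  funext i
  rw [colv_cons, colv_one]
  have expand : (Lam m a).mulVec (fun _ => (1:ℚ)) i
      = ∑ k : Fin (m+1), imchoose a ((m : ℤ) - (i : ℕ) - (k : ℕ)) := by
    simp [Matrix.mulVec, dotProduct, Lam]
  rw [expand, colv_single]
  have hiK : (i : ℕ) ≤ m := by omega
  set K : ℕ := m - (i : ℕ) with hK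
  have step1 : ∑ k : Fin (m+1), imchoose a ((m : ℤ) - (i : ℕ) - (k : ℕ))
      = ∑ k ∈ Finset.range (m+1), imchoose a ((m : ℤ) - (i : ℕ) - (k : ℕ)) := by
    rw [← Fin.sum_univ_eq_sum_range]
  have step2 : ∑ k ∈ Finset.range (K+1), imchoose a ((m : ℤ) - (i : ℕ) - (k : ℕ))
      = ∑ k ∈ Finset.range (m+1), imchoose a ((m : ℤ) - (i : ℕ) - (k : ℕ)) := by
    apply Finset.sum_subset
    · apply Finset.range_subset_range.mpr
      omega
    · intro x _ hx
      simp only [Finset.mem_range] at hx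
      apply imchoose_neg
      omega
  have step3 : ∑ k ∈ Finset.range (K+1), imchoose a ((m : ℤ) - (i : ℕ) - (k : ℕ))
      = ∑ r ∈ Finset.range (K+1), imchoose a (r : ℤ) := by
    rw [← Finset.sum_range_reflect]
    refine Finset.sum_congr rfl fun j hj => ?_
    simp only [Finset.mem_range] at hj
    congr 1
    omega
  rw [step1, ← step2, step3, imchoose_hockey]
  congr 1
  omega

lemma int_dlt (m : ℕ) {c b : ℤ} (hc : 1 ≤ c) (hb : c < b) :
    Dlt m (colv m [c]) (colv m [b]) := by
  intro s t hst
  rw [colv_single, colv_single, colv_single, colv_single]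
  have hst' : (s : ℕ) < (t : ℕ) := hst
  have htm : (t : ℕ) ≤ m := by omega
  have e1 : (m : ℤ) - (s : ℕ) = ((m - (s:ℕ) : ℕ) : ℤ) := by omega
  have e2 : (m : ℤ) - (t : ℕ) = ((m - (t:ℕ) : ℕ) : ℤ) := by omega
  rw [e1, e2, imchoose_eq_cQ, imchoose_eq_cQ, imchoose_eq_cQ, imchoose_eq_cQ]
  exact cQ_int_lt hc hb (by omega)

lemma step_of_dlt (m : ℕ) {a : ℤ} (ha : 1 ≤ a) {v w : Fin (m+1) → ℚ}
    (hv : ∀ i, 0 < v i) (hw : ∀ i, 0 < w i) (hD : Dlt m v w) :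
    Dlt m ((Lam m a).mulVec w) ((Lam m a).mulVec v) := by
  apply step_lemma m ha (fun i => (hv i).le) (fun i => (hw i).le)
    (fun k l h => (hD k l h).le)
  intro l hl
  exact hD ⟨0, by omega⟩ l (show (0:ℕ) < l from hl)

lemma step_boundary (m : ℕ) {a : ℤ} (ha : 1 ≤ a) {v : Fin (m+1) → ℚ}
    (hv : ∀ i, 0 < v i) :
    Dlt m ((Lam m a).mulVec (colv m [])) ((Lam m a).mulVec v) := by
  apply step_lemma m ha (fun i => (hv i).le) (fun i => (colv_nonneg (by simp) i))
  · intro k l hkl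
    rw [colv_nil, colv_nil]
    have hlne : l ≠ ⟨0, by omega⟩ := by
      intro h
      rw [h] at hkl
      exact absurd hkl (by simp [Fin.lt_def])
    rw [if_neg hlne, mul_zero]
    split_ifs with h
    · exact mul_nonneg (hv l).le (by norm_num)
    · simp
  · intro l hl
    rw [colv_nil, colv_nil]
    have hlne : l ≠ ⟨0, by omega⟩ := by
      intro h
      rw [h] at hl
      simp at hl
    rw [if_neg hlne, if_pos rfl, mul_zero, mul_one]
    exact hv l

lemma main_lemma (m : ℕ) : ∀ (n : ℕ) (lx ly : List ℤ), lx.length + ly.length ≤ n →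
    lx ≠ [] → ly ≠ [] → (∀ a ∈ lx, 1 ≤ a) → (∀ a ∈ ly, 1 ≤ a) →
    cfVal lx < cfVal ly → Dlt m (colv m lx) (colv m ly) := by
  intro n
  induction n with
  | zero =>
    intro lx ly hlen hx hy _ _ _
    have h1 := List.length_pos_iff.mpr hx
    have h2 := List.length_pos_iff.mpr hy
    omega
  | succ n IH =>
    intro lx ly hlen hx hy hax hay hval
    obtain ⟨a, tx, rfl⟩ := List.exists_cons_of_ne_nil hx
    obtain ⟨b, ty, rfl⟩ := List.exists_cons_of_ne_nil hy
    have ha1 : 1 ≤ a := hax a (.head _)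
    have hb1 : 1 ≤ b := hay b (.head _)
    have hatx : ∀ x ∈ tx, 1 ≤ x := fun x hxx => hax x (.tail _ hxx)
    have haty : ∀ x ∈ ty, 1 ≤ x := fun x hxx => hay x (.tail _ hxx)
    have hlen' : tx.length + ty.length + 2 ≤ n + 1 := by
      simpa [List.length_cons, Nat.add_assoc, Nat.add_comm, Nat.add_left_comm] using hlen
    rcases lt_trichotomy a b with hab | rfl | hab
    · -- a < b
      have hab1 : a + 1 ≤ b := by omega
      have hmvpos : ∀ i, 0 < colv m [a+1] i :=
        colv_pos (by simp) (by intro x hxx; simp at hxx; omega)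
      have part1 : (Dlt m (colv m (a :: tx)) (colv m [a+1]))
          ∨ (colv m (a :: tx) = colv m [a+1] ∧ cfVal (a :: tx) = (a:ℚ)+1) := by
        rcases eq_or_ne tx [] with rfl | htx
        · left
          rw [colv_cons, ← colv_intstep, colv_cons]
          exact step_boundary m ha1 (fun i => by rw [colv_one]; norm_num)
        · have htx1 : 1 ≤ cfVal tx := one_le_cfVal htx hatx
          rcases eq_or_lt_of_le htx1 with heq | hlt
          · right
            have htx2 : tx = [1] := cfVal_eq_one htx hatx heq.symm
            subst htx2
            constructor
            · exact colv_intstep m a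
            · rw [cfVal_cons _ (by simp), ← heq]
              norm_num
          · left
            have hD1 : Dlt m (colv m [1]) (colv m tx) := by
              apply IH [1] tx (by simp; omega) (by simp) htx (by simp) hatx
              simpa [cfVal_single] using hlt
            rw [colv_cons, ← colv_intstep, colv_cons]
            exact step_of_dlt m ha1 (fun i => by rw [colv_one]; norm_num)
              (colv_pos htx hatx) hD1
      have part2 : (Dlt m (colv m [a+1]) (colv m (b :: ty)))
          ∨ (colv m (b :: ty) = colv m [a+1] ∧ cfVal (b :: ty) = (a:ℚ)+1) := by
        rcases eq_or_lt_of_le hab1 with rfl | hlt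
        · -- b = a + 1
          rcases eq_or_ne ty [] with rfl | hty
          · right
            refine ⟨rfl, ?_⟩
            rw [cfVal_single]
            push_cast
            ring
          · left
            rw [colv_cons m (a+1) [], colv_cons m (a+1) ty]
            exact step_boundary m hb1 (colv_pos hty haty)
      -- b > a+1
        · have hI : Dlt m (colv m [a+1]) (colv m [b]) := int_dlt m (by omega) hlt
          rcases eq_or_ne ty [] with rfl | hty
          · left; exact hI
          · left
            have hB : Dlt m (colv m [b]) (colv m (b :: ty)) := by
              rw [colv_cons m b [], colv_cons m b ty]
              exact step_boundary m hb1 (colv_pos hty haty)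
            exact dlt_trans hmvpos
              (colv_pos (by simp) (by intro x hxx; simp at hxx; omega))
              (colv_pos (by simp) hay) hI hB
      rcases part1 with hD1 | ⟨hE1, hv1⟩
      · rcases part2 with hD2 | ⟨hE2, _⟩
        · exact dlt_trans (colv_pos (by simp) hax) hmvpos (colv_pos (by simp) hay) hD1 hD2
        · rw [hE2]; exact hD1
      · rcases part2 with hD2 | ⟨hE2, hv2⟩
        · rw [hE1]; exact hD2
        · exfalso
          have hxv : cfVal (a :: tx) = (a:ℚ)+1 := hv1
          rw [hxv, hv2] at hval
          exact lt_irrefl _ hval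
    · -- equal heads
      rcases eq_or_ne tx [] with rfl | htx
      · rcases eq_or_ne ty [] with rfl | hty
        · exact absurd hval (lt_irrefl _)
        · rw [colv_cons, colv_cons]
          exact step_boundary m ha1 (colv_pos hty haty)
      · rcases eq_or_ne ty [] with rfl | hty
        · exfalso
          have := cfVal_lt_head a htx hatx
          rw [cfVal_single] at hval
          linarith
        · have h1x := one_le_cfVal htx hatx
          have h1y := one_le_cfVal hty haty
          have hyx : cfVal ty < cfVal tx := by
            rw [cfVal_cons _ htx, cfVal_cons _ hty] at hval
            have hd : 1 / cfVal tx < 1 / cfVal ty := by linarith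
            rw [div_lt_div_iff₀ (by linarith) (by linarith)] at hd
            linarith
          have hD := IH ty tx (by omega) hty htx haty hatx hyx
          rw [colv_cons, colv_cons]
          exact step_of_dlt m ha1 (colv_pos hty haty) (colv_pos htx hatx) hD
    · -- a > b : contradiction
      exfalso
      have h1 : cfVal (b :: ty) ≤ (b:ℚ) + 1 := by
        rcases eq_or_ne ty [] with rfl | hty
        · rw [cfVal_single]; linarith
        · exact cfVal_le_head_succ b hty haty
      have h2 : (a:ℚ) ≤ cfVal (a :: tx) := by
        rcases eq_or_ne tx [] with rfl | htx
        · rw [cfVal_single]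
        · exact (cfVal_lt_head a htx hatx).le
      have h3 : (b:ℚ) + 1 ≤ (a:ℚ) := by exact_mod_cast hab
      linarith

lemma rCF_eq (m : ℕ) (l : List ℤ) (i : ℕ) :
    rCF m l i = colv m l ⟨m - i, by omega⟩ / colv m l ⟨m, by omega⟩ := rfl

/-- Each higher continued fraction map `r_{i,m}` is strictly increasing on rationals in
`[1, ∞)`: if `1 ≤ x < y` then `r_{i,m}(x) < r_{i,m}(y)`.  Moreover each map
`x ↦ r_{m,m}(x)/r_{i,m}(x)` (for `i < m`) is also strictly increasing on `[1, ∞)`. -/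
theorem rCF_strictMono (m : ℕ) (x y : ℚ) (hx : 1 ≤ x) (hxy : x < y)
    (lx ly : List ℤ) (hlx : lx ≠ []) (hly : ly ≠ [])
    (hposx : ∀ a ∈ lx, 1 ≤ a) (hposy : ∀ a ∈ ly, 1 ≤ a)
    (hvalx : cfVal lx = x) (hvaly : cfVal ly = y)
    (i : ℕ) (hi : 1 ≤ i) (him : i ≤ m) :
    rCF m lx i < rCF m ly i ∧
    (i < m → rCF m lx m / rCF m lx i < rCF m ly m / rCF m ly i) := by
  have hval : cfVal lx < cfVal ly := by rw [hvalx, hvaly]; exact hxy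
  have hD := main_lemma m (lx.length + ly.length) lx ly le_rfl hlx hly hposx hposy hval
  have hvx := colv_pos (m := m) hlx hposx
  have hvy := colv_pos (m := m) hly hposy
  constructor
  · rw [rCF_eq, rCF_eq, div_lt_div_iff₀ (hvx _) (hvy _)]
    have h := hD ⟨m - i, by omega⟩ ⟨m, by omega⟩ (by simp [Fin.lt_def]; omega)
    linarith
  · intro him2
    rw [rCF_eq, rCF_eq, rCF_eq, rCF_eq]
    have e0 : (⟨m - m, by omega⟩ : Fin (m+1)) = ⟨0, by omega⟩ := by
      apply Fin.ext
      simp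
    rw [e0]
    have hsimp : ∀ (u : Fin (m+1) → ℚ), (∀ j, 0 < u j) →
        (u ⟨0, by omega⟩ / u ⟨m, by omega⟩) / (u ⟨m - i, by omega⟩ / u ⟨m, by omega⟩)
          = u ⟨0, by omega⟩ / u ⟨m - i, by omega⟩ := by
      intro u hu
      have h1 : u ⟨m, by omega⟩ ≠ 0 := (hu _).ne'
      have h2 : u ⟨m - i, by omega⟩ ≠ 0 := (hu _).ne'
      field_simp
    rw [hsimp _ hvx, hsimp _ hvy, div_lt_div_iff₀ (hvx _) (hvy _)]
    have h := hD ⟨0, by omega⟩ ⟨m - i, by omega⟩ (by simp [Fin.lt_def]; omega)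
    linarith
end
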